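/- arXiv:1705.07068 — 2 statements merged into one kernel-verified Lean document; each statement's English description precedes it below -/
import Mathlib

section
/- Let X be a Hausdorff topological space and K ⊆ X × X compact. Let Φ, Ψ : K → [0,∞) be continuous functions such that: (a) each of Φ and Ψ is point-separating, i.e. for all (x,y) ∈ K, if Φ(x,y) = 0 or Ψ(x,y) = 0 then x = y; (b) Φ and Ψ are locally equivalent, i.e. for every p ∈ X with (p,p) ∈ K there exist a neighbourhood U of p in X and a constant C > 0 such that C^{−1} Φ(x,y) ≤ Ψ(x,y) ≤ C Φ(x,y) for all (x,y) ∈ (U × U) ∩ K. Then Φ and Ψ are globally equivalent: there exists a constant C > 0 such that C^{−1} Φ(x,y) ≤ Ψ(x,y) ≤ C Φ(x,y) for all (x,y) ∈ K. -/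
open Set

/-- for continuous, nonnegative, point-separating functions `Φ, Ψ` on a compact
subset `K` of `X × X`, local equivalence implies global equivalence. -/
theorem statement5 {X : Type*} [TopologicalSpace X] [T2Space X]
    (K : Set (X × X)) (hK : IsCompact K) (Φ Ψ : X × X → ℝ)
    (hΦc : ContinuousOn Φ K) (hΨc : ContinuousOn Ψ K)
    (hΦ0 : ∀ p ∈ K, 0 ≤ Φ p) (hΨ0 : ∀ p ∈ K, 0 ≤ Ψ p)
    (hΦsep : ∀ p ∈ K, Φ p = 0 → p.1 = p.2) (hΨsep : ∀ p ∈ K, Ψ p = 0 → p.1 = p.2)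
    (hloc : ∀ p : X, (p, p) ∈ K → ∃ U ∈ nhds p, ∃ C : ℝ, 0 < C ∧
      ∀ x y : X, (x, y) ∈ K → x ∈ U → y ∈ U →
        C⁻¹ * Φ (x, y) ≤ Ψ (x, y) ∧ Ψ (x, y) ≤ C * Φ (x, y)) :
    ∃ C : ℝ, 0 < C ∧ ∀ p ∈ K, C⁻¹ * Φ p ≤ Ψ p ∧ Ψ p ≤ C * Φ p := by
  have key : ∀ q ∈ K, ∃ t ∈ nhds q, ∃ C : ℝ, 0 < C ∧
      ∀ r ∈ K, r ∈ t → C⁻¹ * Φ r ≤ Ψ r ∧ Ψ r ≤ C * Φ r := by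
    rintro ⟨x, y⟩ hq
    by_cases hxy : x = y
    · subst hxy
      obtain ⟨U, hU, C, hC, h⟩ := hloc x hq
      exact ⟨U ×ˢ U, prod_mem_nhds hU hU, C, hC,
        fun r hr hrt => h r.1 r.2 hr hrt.1 hrt.2⟩
    · set a := Φ (x, y) with ha
      set b := Ψ (x, y) with hb
      have hΦq : 0 < a :=
        lt_of_le_of_ne (hΦ0 _ hq) (fun h => hxy (hΦsep _ hq h.symm))
      have hΨq : 0 < b :=
        lt_of_le_of_ne (hΨ0 _ hq) (fun h => hxy (hΨsep _ hq h.symm))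
      have h1 : Φ ⁻¹' Ioo (a / 2) (2 * a) ∈ nhdsWithin (x, y) K :=
        (hΦc _ hq) (Ioo_mem_nhds (by linarith) (by linarith))
      have h2 : Ψ ⁻¹' Ioo (b / 2) (2 * b) ∈ nhdsWithin (x, y) K :=
        (hΨc _ hq) (Ioo_mem_nhds (by linarith) (by linarith))
      obtain ⟨u, huo, hqu, hsub⟩ := mem_nhdsWithin.mp (Filter.inter_mem h1 h2)
      refine ⟨u, huo.mem_nhds hqu, max (4 * b / a) (4 * a / b),
        lt_max_of_lt_left (by positivity), ?_⟩
      intro r hrK hru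
      obtain ⟨⟨hΦ1, hΦ2⟩, hΨ1, hΨ2⟩ := hsub ⟨hru, hrK⟩
      set C := max (4 * b / a) (4 * a / b) with hC
      have hCpos : 0 < C := lt_max_of_lt_left (by positivity)
      have hC1 : 4 * b ≤ C * a := by
        have := le_max_left (4 * b / a) (4 * a / b)
        calc 4 * b = (4 * b / a) * a := by field_simp
          _ ≤ C * a := by nlinarith
      have hC2 : 4 * a ≤ C * b := by
        have := le_max_right (4 * b / a) (4 * a / b)
        calc 4 * a = (4 * a / b) * b := by field_simp
          _ ≤ C * b := by nlinarith
      constructor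
      · rw [inv_mul_le_iff₀ hCpos]
        nlinarith [mul_le_mul_of_nonneg_left hΨ1.le hCpos.le]
      · nlinarith [mul_le_mul_of_nonneg_left hΦ1.le hCpos.le]
  choose! t ht C hC hbound using key
  obtain ⟨s, hs⟩ := hK.elim_nhds_subcover' (fun q hq => t q) (fun q hq => ht q hq)
  have hsum : (0:ℝ) ≤ ∑ q ∈ s, C ↑q :=
    Finset.sum_nonneg fun q _ => (hC ↑q q.2).le
  refine ⟨1 + ∑ q ∈ s, C ↑q, by linarith, ?_⟩
  intro p hp
  obtain ⟨q, hqs, hpt⟩ := mem_iUnion₂.mp (hs hp)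
  have hCq := hC ↑q q.2
  have hle : C ↑q ≤ 1 + ∑ q ∈ s, C ↑q := by
    have := Finset.single_le_sum (f := fun q : K => C ↑q)
      (fun r _ => (hC ↑r r.2).le) hqs
    linarith
  have hDpos : (0:ℝ) < 1 + ∑ q ∈ s, C ↑q := by linarith
  obtain ⟨hb1, hb2⟩ := hbound ↑q q.2 p hp hpt
  have hΦp := hΦ0 p hp
  constructor
  · calc (1 + ∑ q ∈ s, C ↑q)⁻¹ * Φ p ≤ (C ↑q)⁻¹ * Φ p :=
        mul_le_mul_of_nonneg_right (inv_anti₀ hCq hle) hΦp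
      _ ≤ Ψ p := hb1
  · calc Ψ p ≤ C ↑q * Φ p := hb2
      _ ≤ (1 + ∑ q ∈ s, C ↑q) * Φ p := mul_le_mul_of_nonneg_right hle hΦp
end

section
/- Let κ ∈ [1,∞). Let D ⊆ ℝ be open and φ : D → [0,∞) be differentiable with |φ'(x)| ≤ κ φ(x) for all x ∈ D. Let R ⊆ ℝ satisfy |x − x'| ≥ κ^{−1} for all distinct x, x' ∈ R. Then for every interval I ⊆ D of length |I| ≥ κ^{−1}, ∑_{x ∈ R ∩ I} φ(x) ≤ C_κ ∫_I φ(x) dx, where C_κ depends only on κ (one may take C_κ = 2eκ) and both sides are interpreted in [0,∞]. -/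
/-!
Writing `|φ'| ≤ κ φ` as `(φ e^{κx})' ≥ 0` and `(φ e^{-κx})' ≤ 0` gives the Harnack inequality
`φ x e^{-κ|y-x|} ≤ φ y` on `I`. Hence `φ ≥ φ x / e` on `I ∩ B(x, 1/(2κ))`, a set of measure at least
`1/(2κ)` because `|I| ≥ 1/κ`, so `φ x ≤ 2eκ ∫_{I ∩ B(x, 1/(2κ))} φ`. For `x ∈ R` these sets are
pairwise disjoint, and summing over `R ∩ I` gives the claim.
-/

open MeasureTheory Set Metric Function
open scoped ENNReal

theorem monotoneOn_mul_exp_of_hasDerivAt {s : Set ℝ} (hs : Convex ℝ s) {g g' : ℝ → ℝ} {c : ℝ}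
    (hg : ∀ x ∈ s, HasDerivAt g (g' x) x) (hg' : ∀ x ∈ s, 0 ≤ g' x + c * g x) :
    MonotoneOn (fun x => g x * Real.exp (c * x)) s := by
  have hderiv : ∀ x ∈ s, HasDerivAt (fun x => g x * Real.exp (c * x))
      ((g' x + c * g x) * Real.exp (c * x)) x := fun x hx =>
    ((hg x hx).mul ((hasDerivAt_id' x).const_mul c).exp).congr_deriv (by ring)
  exact monotoneOn_of_hasDerivWithinAt_nonneg hs
    (fun x hx => (hderiv x hx).continuousAt.continuousWithinAt)
    (fun x hx => (hderiv x (interior_subset hx)).hasDerivWithinAt)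
    (fun x hx => mul_nonneg (hg' x (interior_subset hx)) (Real.exp_pos _).le)

theorem mul_exp_neg_abs_le_of_abs_deriv_le {s : Set ℝ} (hs : Convex ℝ s) {φ φ' : ℝ → ℝ}
    {κ : ℝ} (hφ : ∀ x ∈ s, HasDerivAt φ (φ' x) x) (hφ' : ∀ x ∈ s, |φ' x| ≤ κ * φ x)
    {x y : ℝ} (hx : x ∈ s) (hy : y ∈ s) :
    φ x * Real.exp (-(κ * |y - x|)) ≤ φ y := by
  rcases le_total x y with hxy | hyx
  · have hmono : φ x * Real.exp (κ * x) ≤ φ y * Real.exp (κ * y) :=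
      monotoneOn_mul_exp_of_hasDerivAt hs (c := κ) hφ
        (fun z hz => by linarith [neg_abs_le (φ' z), hφ' z hz]) hx hy hxy
    calc φ x * Real.exp (-(κ * |y - x|))
        = φ x * Real.exp (κ * x) * Real.exp (-(κ * y)) := by
          rw [abs_of_nonneg (sub_nonneg.2 hxy), mul_assoc, ← Real.exp_add]; ring_nf
      _ ≤ φ y * Real.exp (κ * y) * Real.exp (-(κ * y)) := by gcongr
      _ = φ y := by rw [mul_assoc, ← Real.exp_add, add_neg_cancel, Real.exp_zero, mul_one]
  · have hanti : φ x * Real.exp (-(κ * x)) ≤ φ y * Real.exp (-(κ * y)) := by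
      have := monotoneOn_mul_exp_of_hasDerivAt hs (g := fun z => -φ z) (c := -κ)
        (fun z hz => (hφ z hz).neg) (fun z hz => by linarith [le_abs_self (φ' z), hφ' z hz])
        hy hx hyx
      simp only [neg_mul] at this
      linarith
    calc φ x * Real.exp (-(κ * |y - x|))
        = φ x * Real.exp (-(κ * x)) * Real.exp (κ * y) := by
          rw [abs_of_nonpos (sub_nonpos.2 hyx), mul_assoc, ← Real.exp_add]; ring_nf
      _ ≤ φ y * Real.exp (-(κ * y)) * Real.exp (κ * y) := by gcongr
      _ = φ y := by rw [mul_assoc, ← Real.exp_add, neg_add_cancel, Real.exp_zero, mul_one]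

theorem min_volume_le_volume_inter_ball {I : Set ℝ} (hI : I.OrdConnected) {x : ℝ} (hx : x ∈ I)
    (r : ℝ) : min (volume I) (ENNReal.ofReal r) ≤ volume (I ∩ ball x r) := by
  by_cases hsub : I ⊆ ball x r
  · rw [inter_eq_left.2 hsub]
    exact min_le_left _ _
  obtain ⟨z, hzI, hz⟩ := not_subset.1 hsub
  rw [Real.ball_eq_Ioo, mem_Ioo, not_and_or, not_lt, not_lt] at hz
  refine (min_le_right _ _).trans ?_
  rw [Real.ball_eq_Ioo]
  rcases hz with hz | hz
  · calc ENNReal.ofReal r = volume (Ioo (x - r) x) := by rw [Real.volume_Ioo, sub_sub_cancel]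
      _ ≤ volume (I ∩ Ioo (x - r) (x + r)) := measure_mono fun y hy =>
          ⟨hI.out hzI hx ⟨by linarith [hy.1], hy.2.le⟩, hy.1, by linarith [hy.1, hy.2]⟩
  · calc ENNReal.ofReal r = volume (Ioo x (x + r)) := by rw [Real.volume_Ioo, add_sub_cancel_left]
      _ ≤ volume (I ∩ Ioo (x - r) (x + r)) := measure_mono fun y hy =>
          ⟨hI.out hx hzI ⟨hy.1.le, by linarith [hy.2]⟩, by linarith [hy.1, hy.2], hy.2⟩

theorem ofReal_le_mul_setLIntegral_inter_ball {κ : ℝ} (hκ : 0 < κ) {I : Set ℝ}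
    (hI : Convex ℝ I) (hvol : ENNReal.ofReal κ⁻¹ ≤ volume I) {φ φ' : ℝ → ℝ}
    (hφ : ∀ x ∈ I, HasDerivAt φ (φ' x) x) (hφ' : ∀ x ∈ I, |φ' x| ≤ κ * φ x) {x : ℝ}
    (hx : x ∈ I) :
    ENNReal.ofReal (φ x) ≤ ENNReal.ofReal (2 * κ * Real.exp 1) *
      ∫⁻ y in I ∩ ball x (2 * κ)⁻¹, ENNReal.ofReal (φ y) := by
  set r := (2 * κ)⁻¹ with hr
  have hκr : κ * r = 1 / 2 := by rw [hr]; field_simp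
  have hφx : 0 ≤ φ x := (mul_nonneg_iff_of_pos_left hκ).1 ((abs_nonneg _).trans (hφ' x hx))
  have hvolJ : ENNReal.ofReal r ≤ volume (I ∩ ball x r) := by
    have hrκ : r ≤ κ⁻¹ := by rw [hr, mul_inv]; linarith [inv_pos.2 hκ]
    exact (le_min ((ENNReal.ofReal_le_ofReal hrκ).trans hvol) le_rfl).trans
      (min_volume_le_volume_inter_ball hI.ordConnected hx r)
  have hlow : ∀ y ∈ I ∩ ball x r,
      ENNReal.ofReal (φ x * Real.exp (-1)) ≤ ENNReal.ofReal (φ y) := by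
    rintro y ⟨hyI, hyx⟩
    rw [mem_ball, Real.dist_eq] at hyx
    have hdist : κ * |y - x| ≤ 1 := by nlinarith
    refine ENNReal.ofReal_le_ofReal (le_trans ?_
      (mul_exp_neg_abs_le_of_abs_deriv_le hI hφ hφ' hx hyI))
    gcongr
  have hmass : ENNReal.ofReal (φ x * Real.exp (-1)) * ENNReal.ofReal r ≤
      ∫⁻ y in I ∩ ball x r, ENNReal.ofReal (φ y) :=
    calc ENNReal.ofReal (φ x * Real.exp (-1)) * ENNReal.ofReal r
        ≤ ENNReal.ofReal (φ x * Real.exp (-1)) * volume (I ∩ ball x r) := by gcongr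
      _ = ∫⁻ _ in I ∩ ball x r, ENNReal.ofReal (φ x * Real.exp (-1)) :=
          (setLIntegral_const _ _).symm
      _ ≤ ∫⁻ y in I ∩ ball x r, ENNReal.ofReal (φ y) :=
          setLIntegral_mono' (hI.ordConnected.measurableSet.inter measurableSet_ball) hlow
  have hφx_eq : φ x = 2 * κ * Real.exp 1 * (φ x * Real.exp (-1) * r) := by
    rw [Real.exp_neg]
    field_simp
    linear_combination (-2 * φ x) * hκr
  rw [hφx_eq, ENNReal.ofReal_mul (by positivity),
    ENNReal.ofReal_mul (by positivity : 0 ≤ φ x * Real.exp (-1))]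
  gcongr

theorem tsum_le_mul_measure_of_le_mul_measure_disjoint {ι α : Type*} [MeasurableSpace α]
    (μ : Measure α) {f : ι → ℝ≥0∞} {c : ℝ≥0∞} {s : Set α} {J : ι → Set α}
    (hJ : ∀ i, MeasurableSet (J i)) (hdisj : Pairwise (Disjoint on J)) (hJs : ∀ i, J i ⊆ s)
    (hf : ∀ i, f i ≤ c * μ (J i)) : ∑' i, f i ≤ c * μ s :=
  calc ∑' i, f i ≤ ∑' i, c * μ (J i) := ENNReal.tsum_le_tsum hf
    _ = c * ∑' i, μ (J i) := ENNReal.tsum_mul_left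
    _ ≤ c * μ (⋃ i, J i) := by gcongr; exact tsum_meas_le_meas_iUnion_of_disjoint μ hJ hdisj
    _ ≤ c * μ s := by gcongr; exact iUnion_subset hJs

/-- a sum of `φ` over a `κ⁻¹`-separated set within an interval `I ⊆ D` of
length at least `κ⁻¹` is controlled by the integral of `φ` over `I`, whenever `φ ≥ 0` is
differentiable on the open set `D` with `|φ'| ≤ κ φ`. -/
theorem statement15 (κ : ℝ) (hκ : 1 ≤ κ) :
    ∃ C : ℝ, 0 < C ∧
      ∀ (D : Set ℝ), IsOpen D →
        ∀ (φ φ' : ℝ → ℝ),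
          (∀ x ∈ D, 0 ≤ φ x ∧ HasDerivAt φ (φ' x) x ∧ |φ' x| ≤ κ * φ x) →
          ∀ (R : Set ℝ), (∀ x ∈ R, ∀ y ∈ R, x ≠ y → κ⁻¹ ≤ |x - y|) →
            ∀ (I : Set ℝ), Convex ℝ I → I ⊆ D → ENNReal.ofReal κ⁻¹ ≤ volume I →
              ∑' x : ↥(R ∩ I), ENNReal.ofReal (φ x) ≤
                ENNReal.ofReal C * ∫⁻ x in I, ENNReal.ofReal (φ x) := by
  have hκ0 : 0 < κ := one_pos.trans_le hκ
  refine ⟨2 * κ * Real.exp 1, by positivity, ?_⟩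
  intro D _ φ φ' hφ R hR I hI hID hvol
  have hImeas : MeasurableSet I := hI.ordConnected.measurableSet
  rw [← withDensity_apply _ hImeas]
  refine tsum_le_mul_measure_of_le_mul_measure_disjoint _
    (J := fun x : ↥(R ∩ I) => I ∩ ball (x : ℝ) (2 * κ)⁻¹)
    (fun _ => hImeas.inter measurableSet_ball) ?_ (fun _ => inter_subset_left) fun x => ?_
  · intro x y hxy
    have hsep : (2 * κ)⁻¹ + (2 * κ)⁻¹ ≤ dist (x : ℝ) y := by
      rw [← two_mul, mul_inv, ← mul_assoc, mul_inv_cancel₀ two_ne_zero, one_mul, Real.dist_eq]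
      exact hR x x.2.1 y y.2.1 (Subtype.coe_injective.ne hxy)
    exact (ball_disjoint_ball hsep).mono inter_subset_right inter_subset_right
  · rw [withDensity_apply _ (hImeas.inter measurableSet_ball)]
    exact ofReal_le_mul_setLIntegral_inter_ball hκ0 hI hvol (fun y hy => (hφ y (hID hy)).2.1)
      (fun y hy => (hφ y (hID hy)).2.2) x.2.2
end
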